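/- For every nonzero special function x for Q, the subspace B_x of A is an indecomposable sub-bimodule of the A-A-bimodule A, and supp(x) = supp(B_x). -/

import Mathlib

set_option maxHeartbeats 1000000
set_option synthInstance.maxHeartbeats 400000

namespace DPF

open Matrix

/-- A finite quiver on `Fin n` (given by an arrow relation, no loops, no two-cycles)
whose underlying (undirected simple) graph is a tree. -/
structure TreeQuiver (n : ℕ) : Type where
  arr : Fin n → Fin n → Prop
  loopless : ∀ i, ¬ arr i i
  oneway : ∀ i j, arr i j → ¬ arr j i
  isTree : (SimpleGraph.fromRel arr).IsTree

namespace TreeQuiver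

variable {n : ℕ}

/-- The underlying simple graph of the quiver. -/
def G (Q : TreeQuiver n) : SimpleGraph (Fin n) := SimpleGraph.fromRel Q.arr

/-- `Q.Reach i j` : `j` is a successor of `i`, i.e. there is an oriented
(possibly trivial) path from `i` to `j`. -/
def Reach (Q : TreeQuiver n) (i j : Fin n) : Prop := Relation.ReflTransGen Q.arr i j

/-- `i` is a sink (no outgoing arrows). -/
def IsSink (Q : TreeQuiver n) (i : Fin n) : Prop := ∀ j, ¬ Q.arr i j

/-- `i` is a source (no incoming arrows). -/
def IsSource (Q : TreeQuiver n) (i : Fin n) : Prop := ∀ j, ¬ Q.arr j i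

/-- The degree of a vertex in the underlying graph. -/
noncomputable def deg (Q : TreeQuiver n) (i : Fin n) : ℕ := {j | Q.G.Adj i j}.ncard

/-- `i ∈ K(Q)`: `i` is a sink or a source. -/
def inK (Q : TreeQuiver n) (i : Fin n) : Prop := Q.IsSink i ∨ Q.IsSource i

/-- `i ∈ K'(Q)`: a sink or a source of degree at least 2. -/
def inK' (Q : TreeQuiver n) (i : Fin n) : Prop := Q.inK i ∧ 2 ≤ Q.deg i

/-- `Q` is admissible: all vertices of degree at least 3 are sinks or sources. -/
def Admissible (Q : TreeQuiver n) : Prop := ∀ i, 3 ≤ Q.deg i → Q.inK i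

/-- A maximal chain of `Q` is (the oriented path between) a pair `(s, t)` where `s` is a
source, `t` is a sink, and `t` is reachable from `s`. -/
def IsMaxChain (Q : TreeQuiver n) (s t : Fin n) : Prop :=
  Q.IsSource s ∧ Q.IsSink t ∧ Q.Reach s t

/-- The vertex set of a chain from `s` to `t`. -/
def chainSet (Q : TreeQuiver n) (s t : Fin n) : Set (Fin n) := {v | Q.Reach s v ∧ Q.Reach v t}

/-- The vertex set of the union of a collection `S` of (maximal) chains, i.e. of the
corresponding "support" subgraph. -/
def suppVerts (Q : TreeQuiver n) (S : Set (Fin n × Fin n)) : Set (Fin n) :=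
  {v | ∃ c ∈ S, v ∈ Q.chainSet c.1 c.2}

/-- The adjacency relation of the subgraph given by the union of the chains in `S`. -/
def suppAdj (Q : TreeQuiver n) (S : Set (Fin n × Fin n)) (i j : Fin n) : Prop :=
  Q.G.Adj i j ∧ ∃ c ∈ S, i ∈ Q.chainSet c.1 c.2 ∧ j ∈ Q.chainSet c.1 c.2

/-- The degree of a vertex in the subgraph given by the union of the chains in `S`. -/
noncomputable def suppDeg (Q : TreeQuiver n) (S : Set (Fin n × Fin n)) (i : Fin n) : ℕ :=
  {j | Q.suppAdj S i j}.ncard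

/-- The subgraph given by the union of the chains in `S` is connected. -/
def SuppConnected (Q : TreeQuiver n) (S : Set (Fin n × Fin n)) : Prop :=
  ∀ u ∈ Q.suppVerts S, ∀ v ∈ Q.suppVerts S, Relation.ReflTransGen (Q.suppAdj S) u v

/-- The two unions of (maximal) chains `S`, `T` are equal as subgraphs of `Q`. -/
def SuppEq (Q : TreeQuiver n) (S T : Set (Fin n × Fin n)) : Prop :=
  Q.suppVerts S = Q.suppVerts T ∧ ∀ i j, Q.suppAdj S i j ↔ Q.suppAdj T i j

/-- A path function: `α i` is a successor of `i` or `0` (here: `none`). -/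
def IsPathFun (Q : TreeQuiver n) (α : Fin n → Option (Fin n)) : Prop :=
  ∀ i j, α i = some j → Q.Reach i j

/-- Monotonicity of a path function. -/
def MonotoneFun (Q : TreeQuiver n) (α : Fin n → Option (Fin n)) : Prop :=
  ∀ i j x, Q.Reach j i → α i = some x → ∃ y, α j = some y ∧ Q.Reach y x

/-- The support of a function `α : Q₀ → Q₀ ∪ {0}`: the set of maximal chains containing
some value of `α`. -/
def suppF (Q : TreeQuiver n) (α : Fin n → Option (Fin n)) : Set (Fin n × Fin n) :=
  {c | Q.IsMaxChain c.1 c.2 ∧ ∃ i x, α i = some x ∧ x ∈ Q.chainSet c.1 c.2}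

/-- A special function: a monotone path function with connected support such that any
sink-or-source vertex of the support sent to `0` has degree `1` in the support. -/
def SpecialFun (Q : TreeQuiver n) (α : Fin n → Option (Fin n)) : Prop :=
  Q.IsPathFun α ∧ Q.MonotoneFun α ∧ Q.SuppConnected (Q.suppF α) ∧
    ∀ i, Q.inK i → i ∈ Q.suppVerts (Q.suppF α) → α i = none → Q.suppDeg (Q.suppF α) i = 1

/-- `Q.Gamma s t`: the vertex set of the connected component of `t` in the graph obtained
from `Q` by deleting the vertex `s`. -/
def Gamma (Q : TreeQuiver n) (s t : Fin n) : Set (Fin n) :=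
  {v | Relation.ReflTransGen (fun a b => Q.G.Adj a b ∧ a ≠ s ∧ b ≠ s) t v}

end TreeQuiver

open TreeQuiver

section Algebra

variable {n : ℕ} (Q : TreeQuiver n) (k : Type) [Field k]

/-- The path algebra of the tree quiver `Q` over `k`, realized concretely as the
subalgebra of `Matrix (Fin n) (Fin n) k` of matrices supported on the reachability
relation; the matrix unit in position `(j, i)` corresponds to the unique path
`a_{ji}` from `i` to `j`. -/
def pathAlg : Subalgebra k (Matrix (Fin n) (Fin n) k) where
  carrier := {x | ∀ i j, ¬ Q.Reach j i → x i j = 0}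
  mul_mem' := by
    intro x y hx hy i j hij
    rw [Matrix.mul_apply]
    refine Finset.sum_eq_zero fun m _ => ?_
    by_cases h1 : Q.Reach m i
    · have h2 : ¬ Q.Reach j m := fun h2 => hij (Relation.ReflTransGen.trans h2 h1)
      rw [hy m j h2, mul_zero]
    · rw [hx i m h1, zero_mul]
  one_mem' := by
    intro i j hij
    have hne : i ≠ j := by rintro rfl; exact hij Relation.ReflTransGen.refl
    exact Matrix.one_apply_ne hne
  add_mem' := by
    intro x y hx hy i j hij
    simp only [Matrix.add_apply, hx i j hij, hy i j hij, add_zero]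
  zero_mem' := by intro i j hij; rfl
  algebraMap_mem' := by
    intro r i j hij
    have hne : i ≠ j := by rintro rfl; exact hij Relation.ReflTransGen.refl
    simp [Matrix.algebraMap_matrix_apply, hne]

theorem std_mem (t s : Fin n) (h : Q.Reach s t) :
    Matrix.single t s (1 : k) ∈ pathAlg Q k := by
  intro i j hij
  by_cases h1 : t = i ∧ s = j
  · obtain ⟨rfl, rfl⟩ := h1
    exact absurd h hij
  · simp only [Matrix.single, Matrix.of_apply, if_neg h1]

/-- The path `a_{ts}` from `s` to `t`, as an element of the path algebra
(by convention `0` if `t` is not a successor of `s`). -/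
noncomputable def aEl (t s : Fin n) : pathAlg Q k :=
  haveI := Classical.dec (Q.Reach s t)
  if h : Q.Reach s t then ⟨Matrix.single t s 1, std_mem Q k t s h⟩ else 0

/-- The trivial path `e_i` at the vertex `i`. -/
noncomputable def e (i : Fin n) : pathAlg Q k :=
  ⟨Matrix.single i i 1, std_mem Q k i i Relation.ReflTransGen.refl⟩

/-- `B` is a two-sided ideal of the path algebra, i.e. a sub-bimodule of the regular
`A`-`A`-bimodule `A`. -/
def IsIdeal (B : Submodule k ↥(pathAlg Q k)) : Prop :=
  (∀ a : ↥(pathAlg Q k), ∀ x ∈ B, a * x ∈ B) ∧ (∀ a : ↥(pathAlg Q k), ∀ x ∈ B, x * a ∈ B)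

/-- `B` is an indecomposable sub-bimodule of `A`: a nonzero two-sided ideal which does not
decompose as an (internal) direct sum of two nonzero sub-bimodules. -/
def Indec (B : Submodule k ↥(pathAlg Q k)) : Prop :=
  IsIdeal Q k B ∧ B ≠ ⊥ ∧
    ∀ B1 B2 : Submodule k ↥(pathAlg Q k), IsIdeal Q k B1 → IsIdeal Q k B2 →
      B1 ⊔ B2 = B → B1 ⊓ B2 = ⊥ → B1 = ⊥ ∨ B2 = ⊥

/-- The support of a two-sided ideal `B`: the set of maximal chains `(s, t)` of `Q`
such that `a_{ts} ∈ B`. -/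
def suppB (B : Submodule k ↥(pathAlg Q k)) : Set (Fin n × Fin n) :=
  {c | Q.IsMaxChain c.1 c.2 ∧ aEl Q k c.2 c.1 ∈ B}

/-- The indecomposable projective left module `P_j = A e_j`, as a left ideal of `A`. -/
def Pmod (j : Fin n) : Submodule ↥(pathAlg Q k) ↥(pathAlg Q k) where
  carrier := {x | x * e Q k j = x}
  add_mem' := by
    intro a b ha hb
    show (a + b) * e Q k j = a + b
    rw [add_mul]
    rw [show a * e Q k j = a from ha, show b * e Q k j = b from hb]
  zero_mem' := by
    show (0 : ↥(pathAlg Q k)) * e Q k j = 0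
    rw [zero_mul]
  smul_mem' := by
    intro c x hx
    show (c • x) * e Q k j = c • x
    rw [smul_eq_mul, mul_assoc, show x * e Q k j = x from hx]

/-- `B e_i`, as a left ideal (left `A`-submodule) of `A`; here `B` is a two-sided ideal. -/
def BeiL (B : Submodule k ↥(pathAlg Q k)) (hB : IsIdeal Q k B) (i : Fin n) :
    Submodule ↥(pathAlg Q k) ↥(pathAlg Q k) where
  carrier := {x | x ∈ B ∧ x * e Q k i = x}
  add_mem' := by
    intro a b ha hb
    exact ⟨B.add_mem ha.1 hb.1, by rw [add_mul, ha.2, hb.2]⟩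
  zero_mem' := ⟨B.zero_mem, by rw [zero_mul]⟩
  smul_mem' := by
    intro c x hx
    refine ⟨?_, ?_⟩
    · show c * x ∈ B
      exact hB.1 c x hx.1
    · show (c • x) * e Q k i = c • x
      rw [smul_eq_mul, mul_assoc, hx.2]

/-- A left `A`-submodule `N` of `A` is (zero or) indecomposable. -/
def IndecL (N : Submodule ↥(pathAlg Q k) ↥(pathAlg Q k)) : Prop :=
  N ≠ ⊥ ∧ ∀ N1 N2 : Submodule ↥(pathAlg Q k) ↥(pathAlg Q k),
    N1 ⊔ N2 = N → N1 ⊓ N2 = ⊥ → N1 = ⊥ ∨ N2 = ⊥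

/-- `x` is "the" function `x_B` associated to the indecomposable sub-bimodule `B`:
`x i = none` iff `B e_i = 0`, and `x i = some j` implies `B e_i ≅ P_j` as left `A`-modules. -/
def IsXB (B : Submodule k ↥(pathAlg Q k)) (hB : IsIdeal Q k B) (x : Fin n → Option (Fin n)) :
    Prop :=
  ∀ i, (x i = none ↔ BeiL Q k B hB i = ⊥) ∧
    ∀ j, x i = some j →
      Nonempty (↥(BeiL Q k B hB i) ≃ₗ[↥(pathAlg Q k)] ↥(Pmod Q k j))

/-- The subspace `B_x` of `A` associated to a (special) function `x` : the `k`-linear span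
of all paths `a_{ts}` with `x s ≠ 0` and `t` a successor of `x s`. -/
def Bspan (x : Fin n → Option (Fin n)) : Submodule k ↥(pathAlg Q k) :=
  Submodule.span k {v | ∃ s xs t, x s = some xs ∧ Q.Reach xs t ∧ v = aEl Q k t s}

/-- The two-sided ideal `J_i`: the span of all paths of `Q` except the trivial path `e_i`. -/
def J (i : Fin n) : Submodule k ↥(pathAlg Q k) :=
  Submodule.span k {v | ∃ t s, Q.Reach s t ∧ ¬(t = i ∧ s = i) ∧ v = aEl Q k t s}

/-- The indecomposable direct summand `J_s^{(q)}` of `J_s` corresponding to the connected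
component (of `Q` with `s` deleted) containing the neighbour `t` of `s`: the span of all
paths `a_{pq}` with `p, q ∈ Γ^{(t)} ∪ {s}` other than `e_s`. -/
def Jc (s t : Fin n) : Submodule k ↥(pathAlg Q k) :=
  Submodule.span k {v | ∃ p q, Q.Reach q p ∧ p ∈ Q.Gamma s t ∪ {s} ∧ q ∈ Q.Gamma s t ∪ {s} ∧
    ¬(p = s ∧ q = s) ∧ v = aEl Q k p q}

end Algebra

section Tensor

open TensorProduct

/-- The multiplication map `I ⊗_k J → A` for two `k`-subspaces `I`, `J` of a `k`-algebra `A`. -/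
noncomputable def mulMap (k A : Type) [CommRing k] [Ring A] [Algebra k A]
    (I J : Submodule k A) : (↥I ⊗[k] ↥J) →ₗ[k] A :=
  TensorProduct.lift (LinearMap.compl₁₂ (LinearMap.mul k A) I.subtype J.subtype)

/-- The submodule of `I ⊗_k J` spanned by the "balancing" relators `ba ⊗ d - b ⊗ ad`;
the quotient of `I ⊗_k J` by it is `I ⊗_A J`, so the multiplication map
`I ⊗_A J → A` is injective if and only if the kernel of `mulMap` equals `balRel`. -/
noncomputable def balRel (k A : Type) [CommRing k] [Ring A] [Algebra k A]
    (I J : Submodule k A) : Submodule k (↥I ⊗[k] ↥J) :=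
  Submodule.span k {z | ∃ (b : I) (d : J) (a : A) (h1 : (b : A) * a ∈ I) (h2 : a * (d : A) ∈ J),
    z = (⟨(b : A) * a, h1⟩ : I) ⊗ₜ[k] d - (b ⊗ₜ[k] (⟨a * (d : A), h2⟩ : J))}

end Tensor


/-!
A two-sided ideal that contains an element with nonzero `(t, s)`-entry contains the path
`a_{ts}` (multiply by `e_t` and `e_s`). So an ideal spanned by paths consists of the matrices
supported on its paths, and in a splitting `B₁ ⊕ B₂` each spanning path lies in exactly one
summand, the same one as all its prolongations. Indecomposability of `B_x` thus amounts to
linking any two spanning paths by prolongations. Every spanning path prolongs to a maximal chain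
`(a, b)` of `supp x`, and for those the key lemma gives `x a ≠ 0` with `b` a successor of `x a`:
by admissibility oriented paths merge only at sinks, where the degree condition on special
functions applies. Paths also branch only at sources, so chains of `supp x` through a common
vertex share a sink or a source and are linked through it; connectivity of `supp x` does the
rest. The key lemma also shows `supp x = supp B_x`.
-/

namespace TreeQuiver

open Relation

variable {n : ℕ}

section Orientation

variable (Q : TreeQuiver n)

theorem adj_of_arr {a b : Fin n} (h : Q.arr a b) : Q.G.Adj a b :=
  (SimpleGraph.fromRel_adj _ _ _).2 ⟨fun hab => Q.loopless a (hab ▸ h), Or.inl h⟩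

theorem exists_walk_of_reach {a b : Fin n} (h : Q.Reach a b) :
    ∃ w : Q.G.Walk a b, ∀ d ∈ w.darts, Q.arr d.fst d.snd := by
  induction h using ReflTransGen.head_induction_on with
  | refl => exact ⟨.nil, by simp⟩
  | head hac _ ih =>
    obtain ⟨w, hw⟩ := ih
    refine ⟨.cons (Q.adj_of_arr hac) w, ?_⟩
    simp only [SimpleGraph.Walk.darts_cons, List.mem_cons, forall_eq_or_imp]
    exact ⟨hac, hw⟩

/-- The only path from `b` to its neighbour `a` in the tree is the edge `ba`, so an oriented
path from `b` to `a` would traverse the arrow `a → b` backwards. -/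
theorem not_reach_of_arr {a b : Fin n} (hab : Q.arr a b) : ¬ Q.Reach b a := by
  intro hba
  obtain ⟨w, hw⟩ := Q.exists_walk_of_reach hba
  have hpath : (⟨w.bypass, w.bypass_isPath⟩ : Q.G.Path b a) =
      SimpleGraph.Path.singleton (Q.adj_of_arr hab).symm :=
    (Q.isTree.isAcyclic.subsingleton_path b a).elim _ _
  have hdart : (⟨(b, a), (Q.adj_of_arr hab).symm⟩ : Q.G.Dart) ∈ w.darts := by
    apply w.darts_bypass_subset_darts
    rw [show w.bypass = _ from congrArg Subtype.val hpath]
    simp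
  exact Q.oneway a b hab (hw _ hdart)

theorem not_transGen_arr_self (a : Fin n) : ¬ TransGen Q.arr a a := fun h =>
  let ⟨_, hab, hba⟩ := TransGen.head'_iff.1 h
  Q.not_reach_of_arr hab hba

theorem wellFounded_arr : WellFounded Q.arr :=
  haveI : Std.Irrefl (TransGen Q.arr) := ⟨Q.not_transGen_arr_self⟩
  Subrelation.wf TransGen.single (Finite.wellFounded_of_trans_of_irrefl _)

theorem wellFounded_swap_arr : WellFounded (Function.swap Q.arr) :=
  haveI : Std.Irrefl (TransGen (Function.swap Q.arr)) :=
    ⟨fun a h => Q.not_transGen_arr_self a (transGen_swap.1 h)⟩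
  Subrelation.wf TransGen.single (Finite.wellFounded_of_trans_of_irrefl _)

theorem exists_isSource_reach (v : Fin n) : ∃ a, Q.IsSource a ∧ Q.Reach a v := by
  obtain ⟨a, hav, hmin⟩ := Q.wellFounded_arr.has_min {a | Q.Reach a v} ⟨v, .refl⟩
  exact ⟨a, fun b hba => hmin b (.head hba hav) hba, hav⟩

theorem exists_isSink_reach (v : Fin n) : ∃ b, Q.IsSink b ∧ Q.Reach v b := by
  obtain ⟨b, hvb, hmin⟩ := Q.wellFounded_swap_arr.has_min {b | Q.Reach v b} ⟨v, .refl⟩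
  exact ⟨b, fun c hbc => hmin c (.tail hvb hbc) hbc, hvb⟩

end Orientation

variable {Q : TreeQuiver n}

theorem IsSink.eq_of_reach {b v : Fin n} (hb : Q.IsSink b) (h : Q.Reach b v) : v = b := by
  rcases ReflTransGen.cases_head h with rfl | ⟨c, hc, -⟩
  · rfl
  · exact absurd hc (hb c)

theorem IsSource.eq_of_reach {a v : Fin n} (ha : Q.IsSource a) (h : Q.Reach v a) : v = a := by
  rcases ReflTransGen.cases_tail h with rfl | ⟨c, -, hc⟩
  · rfl
  · exact absurd hc (ha c)

theorem reach_comparable_or_merge {u u' t : Fin n} (h : Q.Reach u t) (h' : Q.Reach u' t) :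
    Q.Reach u u' ∨ Q.Reach u' u ∨ ∃ m p p', Q.Reach u p ∧ Q.arr p m ∧ Q.Reach u' p' ∧
      Q.arr p' m ∧ p ≠ p' ∧ Q.Reach m t := by
  induction h using ReflTransGen.head_induction_on with
  | refl => exact .inr (.inl h')
  | @head a c hac hct ih =>
    rcases ih with h | h | ⟨m, p, p', hcp, hpm, hu'p', hp'm, hne, hmt⟩
    · exact .inl (.head hac h)
    · rcases ReflTransGen.cases_tail h with rfl | ⟨p', hu'p', hp'c⟩
      · exact .inl (.single hac)
      · by_cases hp'a : p' = a
        · exact .inr (.inl (hp'a ▸ hu'p'))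
        · exact .inr (.inr ⟨c, a, p', .refl, hac, hu'p', hp'c, Ne.symm hp'a, hct⟩)
    · exact .inr (.inr ⟨m, p, p', .head hac hcp, hpm, hu'p', hp'm, hne, hmt⟩)

theorem reach_comparable_or_diverge {s w w' : Fin n} (h : Q.Reach s w) (h' : Q.Reach s w') :
    Q.Reach w w' ∨ Q.Reach w' w ∨ ∃ m q q', Q.Reach s m ∧ Q.arr m q ∧ Q.arr m q' ∧
      q ≠ q' ∧ Q.Reach q w ∧ Q.Reach q' w' := by
  induction h' with
  | refl => exact .inr (.inl h)
  | @tail v c hsv hvc ih =>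
    rcases ih with h | h | ⟨m, q, q', hsm, hmq, hmq', hne, hqw, hq'v⟩
    · exact .inl (h.tail hvc)
    · rcases ReflTransGen.cases_head h with rfl | ⟨q, hvq, hqw⟩
      · exact .inl (.single hvc)
      · by_cases hqc : q = c
        · exact .inr (.inl (hqc ▸ hqw))
        · exact .inr (.inr ⟨v, q, c, hsv, hvq, hvc, hqc, hqw, .refl⟩)
    · exact .inr (.inr ⟨m, q, q', hsm, hmq, hmq', hne, hqw, hq'v.tail hvc⟩)

theorem Admissible.isSink_of_arr_of_arr (hadm : Q.Admissible) {p p' m : Fin n}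
    (hp : Q.arr p m) (hp' : Q.arr p' m) (hne : p ≠ p') : Q.IsSink m := by
  intro r hr
  have hdeg : 3 ≤ Q.deg m := (Set.two_lt_ncard).2
    ⟨p, (Q.adj_of_arr hp).symm, p', (Q.adj_of_arr hp').symm, r, Q.adj_of_arr hr, hne,
      by rintro rfl; exact Q.oneway _ _ hp hr, by rintro rfl; exact Q.oneway _ _ hp' hr⟩
  rcases hadm m hdeg with hs | hs
  · exact hs r hr
  · exact hs p hp

theorem Admissible.isSource_of_arr_of_arr (hadm : Q.Admissible) {m q q' : Fin n}
    (hq : Q.arr m q) (hq' : Q.arr m q') (hne : q ≠ q') : Q.IsSource m := by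
  intro r hr
  have hdeg : 3 ≤ Q.deg m := (Set.two_lt_ncard).2
    ⟨q, Q.adj_of_arr hq, q', Q.adj_of_arr hq', r, (Q.adj_of_arr hr).symm, hne,
      by rintro rfl; exact Q.oneway _ _ hq hr, by rintro rfl; exact Q.oneway _ _ hq' hr⟩
  rcases hadm m hdeg with hs | hs
  · exact hs q hq
  · exact hs r hr

end TreeQuiver

namespace TreeQuiver

variable {n : ℕ} (Q : TreeQuiver n)

/-- A pair `c = (t, s)` stands for the path `a_{ts}`; here `d` prolongs `c ∈ S` at both ends,
so that `a_d ∈ A a_c A`. -/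
def ExtendsIn (S : Set (Fin n × Fin n)) (c d : Fin n × Fin n) : Prop :=
  c ∈ S ∧ Q.Reach c.1 d.1 ∧ Q.Reach d.2 c.2

def ExtensionConnected (S : Set (Fin n × Fin n)) : Prop :=
  ∀ c ∈ S, ∀ d ∈ S, Relation.EqvGen (Q.ExtendsIn S) c d

end TreeQuiver

section PathAlgebra

variable {n : ℕ} {Q : TreeQuiver n} {k : Type} [Field k]

variable (Q k) in
def pathSpan (S : Set (Fin n × Fin n)) : Submodule k (pathAlg Q k) :=
  Submodule.span k ((fun c => aEl Q k c.1 c.2) '' S)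

theorem reach_of_apply_ne_zero (b : pathAlg Q k) {t s : Fin n} (h : b.1 t s ≠ 0) :
    Q.Reach s t :=
  by_contra fun hn => h (b.2 t s hn)

theorem coe_aEl {t s : Fin n} (h : Q.Reach s t) : (aEl Q k t s).1 = single t s 1 := by
  rw [aEl, dif_pos h]

theorem aEl_of_not_reach {t s : Fin n} (h : ¬ Q.Reach s t) : aEl Q k t s = 0 := by
  rw [aEl, dif_neg h]

theorem aEl_apply_self {t s : Fin n} (h : Q.Reach s t) : (aEl Q k t s).1 t s = 1 := by
  rw [coe_aEl h, single_apply_same]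

theorem eq_of_aEl_apply_ne_zero {t s i j : Fin n} (h : (aEl Q k t s).1 i j ≠ 0) :
    i = t ∧ j = s := by
  by_cases hr : Q.Reach s t
  · rw [coe_aEl hr, single_apply] at h
    obtain ⟨hi, hj⟩ := (ite_ne_right_iff.1 h).1
    exact ⟨hi.symm, hj.symm⟩
  · rw [aEl_of_not_reach hr] at h
    exact absurd rfl h

theorem aEl_ne_zero {t s : Fin n} (h : Q.Reach s t) : aEl Q k t s ≠ 0 := fun h0 =>
  one_ne_zero ((aEl_apply_self h).symm.trans (by rw [h0]; rfl) : (1 : k) = 0)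

theorem aEl_mul_aEl {a b c : Fin n} (hba : Q.Reach b a) (hcb : Q.Reach c b) :
    aEl Q k a b * aEl Q k b c = aEl Q k a c := by
  apply Subtype.ext
  rw [MulMemClass.coe_mul, coe_aEl hba, coe_aEl hcb, coe_aEl (hcb.trans hba),
    single_mul_single_same, one_mul]

theorem sum_smul_aEl (b : pathAlg Q k) : ∑ t, ∑ s, b.1 t s • aEl Q k t s = b := by
  apply Subtype.ext
  conv_rhs => rw [matrix_eq_sum_single b.1]
  simp only [AddSubmonoidClass.coe_finsetSum, SetLike.val_smul]
  refine Finset.sum_congr rfl fun t _ => Finset.sum_congr rfl fun s _ => ?_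
  by_cases h : Q.Reach s t
  · rw [coe_aEl h, smul_single, smul_eq_mul, mul_one]
  · rw [b.2 t s h, zero_smul, single_zero]

theorem e_mul_mul_e (b : pathAlg Q k) {t s : Fin n} (h : Q.Reach s t) :
    e Q k t * b * e Q k s = b.1 t s • aEl Q k t s := by
  apply Subtype.ext
  rw [MulMemClass.coe_mul, MulMemClass.coe_mul, SetLike.val_smul, coe_aEl h, smul_single,
    smul_eq_mul, mul_one]
  exact (single_mul_mul_single t t s s 1 b.1 1).trans (by rw [one_mul, mul_one])

theorem IsIdeal.aEl_mem {B : Submodule k (pathAlg Q k)} (hB : IsIdeal Q k B)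
    {b : pathAlg Q k} (hb : b ∈ B) {t s : Fin n} (h : b.1 t s ≠ 0) : aEl Q k t s ∈ B := by
  have hmem : b.1 t s • aEl Q k t s ∈ B := by
    rw [← e_mul_mul_e b (reach_of_apply_ne_zero b h)]
    exact hB.2 _ _ (hB.1 _ _ hb)
  simpa [smul_smul, inv_mul_cancel₀ h] using B.smul_mem (b.1 t s)⁻¹ hmem

theorem IsIdeal.aEl_mem_of_reach {B : Submodule k (pathAlg Q k)} (hB : IsIdeal Q k B)
    {t s t' s' : Fin n} (hst : Q.Reach s t) (ht : Q.Reach t t') (hs : Q.Reach s' s)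
    (h : aEl Q k t s ∈ B) : aEl Q k t' s' ∈ B := by
  rw [← aEl_mul_aEl (hst.trans ht) hs, ← aEl_mul_aEl ht hst]
  exact hB.2 _ _ (hB.1 _ _ h)

theorem aEl_mem_or_aEl_mem_of_mem_sup {B₁ B₂ : Submodule k (pathAlg Q k)}
    (hB₁ : IsIdeal Q k B₁) (hB₂ : IsIdeal Q k B₂) {t s : Fin n} (h : Q.Reach s t)
    (hmem : aEl Q k t s ∈ B₁ ⊔ B₂) : aEl Q k t s ∈ B₁ ∨ aEl Q k t s ∈ B₂ := by
  obtain ⟨y, hy, z, hz, hyz⟩ := Submodule.mem_sup.1 hmem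
  have hsum : y.1 t s + z.1 t s = 1 := by rw [← aEl_apply_self h, ← hyz]; rfl
  by_cases hy0 : y.1 t s = 0
  · rw [hy0, zero_add] at hsum
    exact .inr (hB₂.aEl_mem hz (hsum ▸ one_ne_zero))
  · exact .inl (hB₁.aEl_mem hy hy0)

theorem mem_pathSpan_iff {S : Set (Fin n × Fin n)} {b : pathAlg Q k} :
    b ∈ pathSpan Q k S ↔ ∀ t s, b.1 t s ≠ 0 → (t, s) ∈ S := by
  constructor
  · intro hb
    induction hb using Submodule.span_induction with
    | mem v hv =>
      obtain ⟨c, hc, rfl⟩ := hv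
      intro t s h
      obtain ⟨rfl, rfl⟩ := eq_of_aEl_apply_ne_zero h
      exact hc
    | zero => exact fun t s h => absurd rfl h
    | add v w _ _ hv hw =>
      intro t s h
      by_cases hv0 : v.1 t s = 0
      · exact hw t s (by simpa [hv0] using h)
      · exact hv t s hv0
    | smul c v _ hv =>
      intro t s h
      rw [SetLike.val_smul, Matrix.smul_apply] at h
      exact hv t s (right_ne_zero_of_smul h)
  · intro h
    rw [← sum_smul_aEl b]
    refine Submodule.sum_mem _ fun t _ => Submodule.sum_mem _ fun s _ => ?_
    by_cases h0 : b.1 t s = 0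
    · rw [h0, zero_smul]
      exact zero_mem _
    · exact Submodule.smul_mem _ _ (Submodule.subset_span ⟨(t, s), h t s h0, rfl⟩)

theorem aEl_mem_pathSpan_iff {S : Set (Fin n × Fin n)} {t s : Fin n} (h : Q.Reach s t) :
    aEl Q k t s ∈ pathSpan Q k S ↔ (t, s) ∈ S := by
  rw [mem_pathSpan_iff]
  refine ⟨fun hS => hS t s (by rw [aEl_apply_self h]; exact one_ne_zero), fun hts i j hij => ?_⟩
  obtain ⟨rfl, rfl⟩ := eq_of_aEl_apply_ne_zero hij
  exact hts

theorem isIdeal_pathSpan {S : Set (Fin n × Fin n)} (hS : ∀ c d, Q.ExtendsIn S c d → d ∈ S) :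
    IsIdeal Q k (pathSpan Q k S) := by
  refine ⟨fun a b hb => ?_, fun a b hb => ?_⟩ <;> rw [mem_pathSpan_iff] at hb ⊢ <;>
    intro t s h <;> rw [MulMemClass.coe_mul, mul_apply] at h <;>
    obtain ⟨m, -, hm⟩ := Finset.exists_ne_zero_of_sum_ne_zero h
  · exact hS (m, s) (t, s)
      ⟨hb m s (right_ne_zero_of_mul hm), reach_of_apply_ne_zero a (left_ne_zero_of_mul hm), .refl⟩
  · exact hS (t, m) (t, s)
      ⟨hb t m (left_ne_zero_of_mul hm), .refl, reach_of_apply_ne_zero a (right_ne_zero_of_mul hm)⟩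

theorem pathSpan_ne_bot {S : Set (Fin n × Fin n)} {c : Fin n × Fin n} (hc : c ∈ S)
    (h : Q.Reach c.2 c.1) : pathSpan Q k S ≠ ⊥ := fun hbot =>
  aEl_ne_zero h ((Submodule.mem_bot k).1 (hbot ▸ (aEl_mem_pathSpan_iff h).2 hc))

theorem eq_bot_of_forall_aEl_notMem {S : Set (Fin n × Fin n)} {B : Submodule k (pathAlg Q k)}
    (hB : IsIdeal Q k B) (hle : B ≤ pathSpan Q k S)
    (hS : ∀ c ∈ S, aEl Q k c.1 c.2 ∉ B) : B = ⊥ := by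
  refine (Submodule.eq_bot_iff B).2 fun b hb => Subtype.ext (Matrix.ext fun t s => ?_)
  by_contra h
  exact hS (t, s) (mem_pathSpan_iff.1 (hle hb) t s h) (hB.aEl_mem hb h)

theorem eq_bot_or_eq_bot_of_sup_eq_pathSpan {S : Set (Fin n × Fin n)}
    (hreach : ∀ c ∈ S, Q.Reach c.2 c.1) (hconn : Q.ExtensionConnected S)
    {B₁ B₂ : Submodule k (pathAlg Q k)} (hB₁ : IsIdeal Q k B₁) (hB₂ : IsIdeal Q k B₂)
    (hsup : B₁ ⊔ B₂ = pathSpan Q k S) (hinf : B₁ ⊓ B₂ = ⊥) : B₁ = ⊥ ∨ B₂ = ⊥ := by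
  have hdisj : ∀ {t s : Fin n}, Q.Reach s t → aEl Q k t s ∈ B₁ → aEl Q k t s ∉ B₂ :=
    fun h h₁ h₂ => aEl_ne_zero h (Submodule.disjoint_def.1 (disjoint_iff.2 hinf) _ h₁ h₂)
  have hstep : ∀ c d, Q.ExtendsIn S c d → (aEl Q k c.1 c.2 ∈ B₁ ↔ aEl Q k d.1 d.2 ∈ B₁) := by
    rintro c d ⟨hc, ht, hs⟩
    have hmem : aEl Q k c.1 c.2 ∈ B₁ ⊔ B₂ := hsup ▸ (aEl_mem_pathSpan_iff (hreach c hc)).2 hc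
    refine ⟨hB₁.aEl_mem_of_reach (hreach c hc) ht hs, fun hd => ?_⟩
    refine (aEl_mem_or_aEl_mem_of_mem_sup hB₁ hB₂ (hreach c hc) hmem).resolve_right fun hc₂ => ?_
    exact hdisj (hs.trans ((hreach c hc).trans ht)) hd
      (hB₂.aEl_mem_of_reach (hreach c hc) ht hs hc₂)
  have hinv : ∀ c ∈ S, ∀ d ∈ S, (aEl Q k c.1 c.2 ∈ B₁ ↔ aEl Q k d.1 d.2 ∈ B₁) :=
    fun c hc d hd => (Equivalence.eqvGen_iff
      (r := fun c d : Fin n × Fin n => (aEl Q k c.1 c.2 ∈ B₁ ↔ aEl Q k d.1 d.2 ∈ B₁))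
      ⟨fun _ => Iff.rfl, Iff.symm, Iff.trans⟩).1
      (Relation.EqvGen.mono hstep _ _ (hconn c hc d hd))
  by_cases h : ∃ c ∈ S, aEl Q k c.1 c.2 ∈ B₁
  · obtain ⟨c, hc, hc₁⟩ := h
    refine .inr (eq_bot_of_forall_aEl_notMem hB₂ (hsup ▸ le_sup_right) fun d hd => ?_)
    exact hdisj (hreach d hd) ((hinv c hc d hd).1 hc₁)
  · push Not at h
    exact .inl (eq_bot_of_forall_aEl_notMem hB₁ (hsup ▸ le_sup_left) h)

theorem indec_pathSpan {S : Set (Fin n × Fin n)} (hreach : ∀ c ∈ S, Q.Reach c.2 c.1)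
    (hclosed : ∀ c d, Q.ExtendsIn S c d → d ∈ S) (hconn : Q.ExtensionConnected S)
    (hne : S.Nonempty) : Indec Q k (pathSpan Q k S) :=
  ⟨isIdeal_pathSpan hclosed, pathSpan_ne_bot hne.some_mem (hreach _ hne.some_mem),
    fun _ _ hB₁ hB₂ => eq_bot_or_eq_bot_of_sup_eq_pathSpan hreach hconn hB₁ hB₂⟩

theorem suppB_pathSpan (S : Set (Fin n × Fin n)) :
    suppB Q k (pathSpan Q k S) = {c | Q.IsMaxChain c.1 c.2 ∧ (c.2, c.1) ∈ S} :=
  Set.ext fun _ => and_congr_right fun hc => aEl_mem_pathSpan_iff hc.2.2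

end PathAlgebra

namespace TreeQuiver

open Relation

variable {n : ℕ} {Q : TreeQuiver n} {x : Fin n → Option (Fin n)}

variable (Q) in
def bPaths (x : Fin n → Option (Fin n)) : Set (Fin n × Fin n) :=
  {c | ∃ u, x c.2 = some u ∧ Q.Reach u c.1}

theorem IsPathFun.reach_of_mem_bPaths (hx : Q.IsPathFun x) {c : Fin n × Fin n}
    (hc : c ∈ Q.bPaths x) : Q.Reach c.2 c.1 :=
  let ⟨u, hu, hut⟩ := hc
  (hx _ u hu).trans hut

theorem MonotoneFun.mem_bPaths_of_extendsIn (hx : Q.MonotoneFun x) {c d : Fin n × Fin n}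
    (h : Q.ExtendsIn (Q.bPaths x) c d) : d ∈ Q.bPaths x := by
  obtain ⟨⟨u, hu, hut⟩, ht, hs⟩ := h
  obtain ⟨y, hy, hyu⟩ := hx _ _ u hs hu
  exact ⟨y, hy, hyu.trans (hut.trans ht)⟩

/-- The support has degree at least two at `m`, so the special-function condition forces
`x m ≠ 0`. -/
theorem SpecialFun.apply_eq_self_of_arr_of_arr (hx : Q.SpecialFun x) {a a' p p' m : Fin n}
    (hm : Q.IsSink m) (hC : (a, m) ∈ Q.suppF x) (hC' : (a', m) ∈ Q.suppF x)
    (hap : Q.Reach a p) (ha'p' : Q.Reach a' p') (hpm : Q.arr p m) (hp'm : Q.arr p' m)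
    (hne : p ≠ p') : x m = some m := by
  have hadj : Q.suppAdj (Q.suppF x) m p :=
    ⟨(Q.adj_of_arr hpm).symm, _, hC, ⟨hC.1.2.2, .refl⟩, ⟨hap, .single hpm⟩⟩
  have hadj' : Q.suppAdj (Q.suppF x) m p' :=
    ⟨(Q.adj_of_arr hp'm).symm, _, hC', ⟨hC'.1.2.2, .refl⟩, ⟨ha'p', .single hp'm⟩⟩
  have hdeg : 1 < Q.suppDeg (Q.suppF x) m := (Set.one_lt_ncard).2 ⟨p, hadj, p', hadj', hne⟩
  obtain ⟨z, hz⟩ := Option.ne_none_iff_exists'.1 fun hnone =>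
    hdeg.ne' (hx.2.2.2 m (.inl hm) ⟨_, hC, hC.1.2.2, .refl⟩ hnone)
  rwa [hm.eq_of_reach (hx.1 m z hz)] at hz

theorem SpecialFun.mem_bPaths_of_mem_suppF (hadm : Q.Admissible) (hx : Q.SpecialFun x)
    {a b : Fin n} (hC : (a, b) ∈ Q.suppF x) : (b, a) ∈ Q.bPaths x := by
  obtain ⟨ha, -, -⟩ := hC.1
  obtain ⟨i, w, hiw, haw, hwb⟩ := hC.2
  rcases reach_comparable_or_merge (hx.1 i w hiw) haw with
    hia | hai | ⟨m, p, p', hip, hpm, hap', hp'm, hne, hmw⟩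
  · obtain rfl := ha.eq_of_reach hia
    exact ⟨w, hiw, hwb⟩
  · obtain ⟨y, hy, hyw⟩ := hx.2.1 i a w hai hiw
    exact ⟨y, hy, hyw.trans hwb⟩
  · have hm : Q.IsSink m := hadm.isSink_of_arr_of_arr hpm hp'm hne
    obtain rfl : w = m := hm.eq_of_reach hmw
    obtain rfl : b = w := hm.eq_of_reach hwb
    obtain ⟨a₂, ha₂, ha₂i⟩ := Q.exists_isSource_reach i
    have hib : Q.Reach i b := hip.tail hpm
    have hC₂ : (a₂, b) ∈ Q.suppF x :=
      ⟨⟨ha₂, hm, ha₂i.trans hib⟩, i, b, hiw, ha₂i.trans hib, .refl⟩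
    have hxb := hx.apply_eq_self_of_arr_of_arr hm hC₂ hC (ha₂i.trans hip) hap' hpm hp'm hne
    obtain ⟨y, hy, hyb⟩ := hx.2.1 b a b haw hxb
    exact ⟨y, hy, hyb⟩

theorem SpecialFun.suppF_eq (hadm : Q.Admissible) (hx : Q.SpecialFun x) :
    Q.suppF x = {c | Q.IsMaxChain c.1 c.2 ∧ (c.2, c.1) ∈ Q.bPaths x} := by
  ext ⟨a, b⟩
  refine ⟨fun hC => ⟨hC.1, hx.mem_bPaths_of_mem_suppF hadm hC⟩, ?_⟩
  rintro ⟨hab, u, hu, hub⟩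
  exact ⟨hab, a, u, hu, hx.1 a u hu, hub⟩

theorem SpecialFun.eqvGen_of_same_sink (hadm : Q.Admissible) (hx : Q.SpecialFun x)
    {a a' t : Fin n} (hC : (a, t) ∈ Q.suppF x) (hC' : (a', t) ∈ Q.suppF x) :
    EqvGen (Q.ExtendsIn (Q.bPaths x)) (t, a) (t, a') := by
  obtain ⟨ha, ht, hat⟩ := hC.1
  obtain ⟨ha', -, ha't⟩ := hC'.1
  rcases reach_comparable_or_merge hat ha't with
    h | h | ⟨m, p, p', hap, hpm, ha'p', hp'm, hne, hmt⟩
  · obtain rfl := ha'.eq_of_reach h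
    exact .refl _
  · obtain rfl := ha.eq_of_reach h
    exact .refl _
  · have hm : Q.IsSink m := hadm.isSink_of_arr_of_arr hpm hp'm hne
    obtain rfl : t = m := hm.eq_of_reach hmt
    have htt : (t, t) ∈ Q.bPaths x :=
      ⟨t, hx.apply_eq_self_of_arr_of_arr hm hC hC' hap ha'p' hpm hp'm hne, .refl⟩
    exact .trans _ _ _ (.symm _ _ (.rel _ _ ⟨htt, .refl, hat⟩)) (.rel _ _ ⟨htt, .refl, ha't⟩)

theorem SpecialFun.eqvGen_of_same_source (hadm : Q.Admissible) (hx : Q.SpecialFun x)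
    {a b b' : Fin n} (hC : (a, b) ∈ Q.suppF x) (hC' : (a, b') ∈ Q.suppF x) :
    EqvGen (Q.ExtendsIn (Q.bPaths x)) (b, a) (b', a) := by
  obtain ⟨y, hy, hyb⟩ := hx.mem_bPaths_of_mem_suppF hadm hC
  obtain ⟨y', hy', hyb'⟩ := hx.mem_bPaths_of_mem_suppF hadm hC'
  obtain rfl : y = y' := Option.some_injective _ (hy.symm.trans hy')
  have hya : (y, a) ∈ Q.bPaths x := ⟨y, hy, .refl⟩
  exact .trans _ _ _ (.symm _ _ (.rel _ _ ⟨hya, hyb, .refl⟩)) (.rel _ _ ⟨hya, hyb', .refl⟩)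

theorem SpecialFun.eqvGen_of_mem_chainSet (hadm : Q.Admissible) (hx : Q.SpecialFun x)
    {C D : Fin n × Fin n} (hC : C ∈ Q.suppF x) (hD : D ∈ Q.suppF x) {v : Fin n}
    (hvC : v ∈ Q.chainSet C.1 C.2) (hvD : v ∈ Q.chainSet D.1 D.2) :
    EqvGen (Q.ExtendsIn (Q.bPaths x)) (C.2, C.1) (D.2, D.1) := by
  obtain ⟨a, b⟩ := C
  obtain ⟨a', b'⟩ := D
  rcases reach_comparable_or_diverge hvC.2 hvD.2 with
    h | h | ⟨m, q, q', hvm, hmq, hmq', hne, -, -⟩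
  · obtain rfl := hC.1.2.1.eq_of_reach h
    exact hx.eqvGen_of_same_sink hadm hC hD
  · obtain rfl := hD.1.2.1.eq_of_reach h
    exact hx.eqvGen_of_same_sink hadm hC hD
  · have hm : Q.IsSource m := hadm.isSource_of_arr_of_arr hmq hmq' hne
    obtain rfl : a = m := hm.eq_of_reach (hvC.1.trans hvm)
    obtain rfl : a' = a := hm.eq_of_reach (hvD.1.trans hvm)
    exact hx.eqvGen_of_same_source hadm hC hD

theorem SpecialFun.eqvGen_of_mem_suppF (hadm : Q.Admissible) (hx : Q.SpecialFun x)
    {C D : Fin n × Fin n} (hC : C ∈ Q.suppF x) (hD : D ∈ Q.suppF x) :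
    EqvGen (Q.ExtendsIn (Q.bPaths x)) (C.2, C.1) (D.2, D.1) := by
  suffices ∀ v, ReflTransGen (Q.suppAdj (Q.suppF x)) C.1 v → ∀ E ∈ Q.suppF x,
      v ∈ Q.chainSet E.1 E.2 → EqvGen (Q.ExtendsIn (Q.bPaths x)) (C.2, C.1) (E.2, E.1) from
    this D.1 (hx.2.2.1 _ ⟨C, hC, .refl, hC.1.2.2⟩ _ ⟨D, hD, .refl, hD.1.2.2⟩) D hD
      ⟨.refl, hD.1.2.2⟩
  intro v hv
  induction hv with
  | refl => exact fun E hE hvE => hx.eqvGen_of_mem_chainSet hadm hC hE ⟨.refl, hC.1.2.2⟩ hvE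
  | tail _ hadj ih =>
    obtain ⟨-, E₀, hE₀, huE₀, hvE₀⟩ := hadj
    exact fun E hE hvE =>
      .trans _ _ _ (ih E₀ hE₀ huE₀) (hx.eqvGen_of_mem_chainSet hadm hE₀ hE hvE₀ hvE)

theorem IsPathFun.exists_mem_suppF_eqvGen (hx : Q.IsPathFun x) {c : Fin n × Fin n}
    (hc : c ∈ Q.bPaths x) :
    ∃ C ∈ Q.suppF x, EqvGen (Q.ExtendsIn (Q.bPaths x)) c (C.2, C.1) := by
  obtain ⟨u, hu, hut⟩ := hc
  obtain ⟨a, ha, has⟩ := Q.exists_isSource_reach c.2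
  obtain ⟨b, hb, htb⟩ := Q.exists_isSink_reach c.1
  have hsu : Q.Reach c.2 u := hx _ u hu
  refine ⟨(a, b), ⟨⟨ha, hb, has.trans (hsu.trans (hut.trans htb))⟩, c.2, u, hu,
    has.trans hsu, hut.trans htb⟩, .rel _ _ ⟨⟨u, hu, hut⟩, htb, has⟩⟩

theorem SpecialFun.extensionConnected_bPaths (hadm : Q.Admissible) (hx : Q.SpecialFun x) :
    Q.ExtensionConnected (Q.bPaths x) := by
  intro c hc d hd
  obtain ⟨C, hC, hcC⟩ := hx.1.exists_mem_suppF_eqvGen hc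
  obtain ⟨D, hD, hdD⟩ := hx.1.exists_mem_suppF_eqvGen hd
  exact .trans _ _ _ hcC (.trans _ _ _ (hx.eqvGen_of_mem_suppF hadm hC hD) (.symm _ _ hdD))

end TreeQuiver

theorem Bspan_eq_pathSpan {n : ℕ} {Q : TreeQuiver n} {k : Type} [Field k]
    (x : Fin n → Option (Fin n)) : Bspan Q k x = pathSpan Q k (Q.bPaths x) := by
  refine congrArg (Submodule.span k) (Set.ext fun v => ⟨?_, ?_⟩)
  · rintro ⟨s, u, t, hu, hut, rfl⟩
    exact ⟨(t, s), ⟨u, hu, hut⟩, rfl⟩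
  · rintro ⟨⟨t, s⟩, ⟨u, hu, hut⟩, rfl⟩
    exact ⟨s, u, t, hu, hut, rfl⟩

theorem statement4_general {n : ℕ} (k : Type) [Field k]
    (Q : TreeQuiver n) (hadm : Q.Admissible)
    (x : Fin n → Option (Fin n)) (hx : Q.SpecialFun x) (hx0 : ∃ i, x i ≠ none) :
    Indec Q k (Bspan Q k x) ∧ Q.SuppEq (Q.suppF x) (suppB Q k (Bspan Q k x)) := by
  obtain ⟨i, hi⟩ := hx0
  obtain ⟨u, hu⟩ := Option.ne_none_iff_exists'.1 hi
  have hsupp : Q.suppF x = suppB Q k (Bspan Q k x) := by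
    rw [Bspan_eq_pathSpan, suppB_pathSpan, hx.suppF_eq hadm]
  refine ⟨?_, by rw [hsupp]; exact ⟨rfl, fun _ _ => Iff.rfl⟩⟩
  rw [Bspan_eq_pathSpan]
  exact indec_pathSpan (fun _ => hx.1.reach_of_mem_bPaths)
    (fun _ _ => hx.2.1.mem_bPaths_of_extendsIn) (hx.extensionConnected_bPaths hadm)
    ⟨(u, i), u, hu, .refl⟩

/-- For every nonzero special function `x` for `Q`, the subspace `B_x` of `A`
is an indecomposable sub-bimodule of `A`, and `supp(x) = supp(B_x)` (as subgraphs of `Q`). -/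
theorem statement4 {n : ℕ} (k : Type) [Field k] [IsAlgClosed k] (hn : 1 < n)
    (Q : TreeQuiver n) (hadm : Q.Admissible) (hK' : ∃ s, Q.inK' s)
    (x : Fin n → Option (Fin n)) (hx : Q.SpecialFun x) (hx0 : ∃ i, x i ≠ none) :
    Indec Q k (Bspan Q k x) ∧ Q.SuppEq (Q.suppF x) (suppB Q k (Bspan Q k x)) :=
  statement4_general k Q hadm x hx hx0

end DPF
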